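/- arXiv:1210.7779 — 4 statements merged into one kernel-verified Lean document; each statement's English description precedes it below -/
import Mathlib

section
/- Let c : ℕ → ℕ with c 0 = 0 and c i = 4^i for i ≥ 1. Then for every i ≥ 0 and every k ≥ 1, the sum ∑_{l=1}^{k} 2^(c i + i + l + 2) / 2^(c (i+l)) ≤ 1 (as real numbers). -/
/-!
For `l ≥ 1` we have `c i + i + 2 ≤ 2 * 4 ^ i` (also for `i = 0`, where `c 0 = 0`) and
`2 * l + 2 ≤ 4 ^ l`, so `c (i + l) = 4 ^ i * 4 ^ l ≥ 4 ^ i * (2 * l + 2) ≥ c i + i + 2 + 2 * l`.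
Hence the `l`-th term is at most `2⁻¹ ^ l`, and `∑_{l ≥ 1} 2⁻¹ ^ l ≤ 1`.
-/

open Finset

lemma two_mul_add_two_le_four_pow {l : ℕ} (hl : 1 ≤ l) : 2 * l + 2 ≤ 4 ^ l := by
  have hlt : l < 2 ^ l := Nat.lt_two_pow_self
  calc 2 * l + 2 ≤ 2 ^ (l + 1) := by rw [pow_succ]; omega
    _ ≤ 2 ^ (2 * l) := Nat.pow_le_pow_right (by norm_num) (by omega)
    _ = 4 ^ l := by rw [pow_mul]; norm_num

lemma sum_Icc_two_pow_div_two_pow_le_one {a b : ℕ → ℕ} (k : ℕ)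
    (hab : ∀ l ∈ Icc 1 k, a l + l ≤ b l) :
    ∑ l ∈ Icc 1 k, (2 : ℝ) ^ a l / 2 ^ b l ≤ 1 := by
  have hterm : ∀ l ∈ Icc 1 k, (2 : ℝ) ^ a l / 2 ^ b l ≤ 2⁻¹ ^ l := by
    intro l hl
    rw [inv_pow, div_le_iff₀ (by positivity), ← div_eq_inv_mul,
      le_div_iff₀ (by positivity), ← pow_add]
    exact pow_le_pow_right₀ (by norm_num) (hab l hl)
  calc ∑ l ∈ Icc 1 k, (2 : ℝ) ^ a l / 2 ^ b l
      ≤ ∑ l ∈ Ico 1 (k + 1), (2⁻¹ : ℝ) ^ l := sum_le_sum hterm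
    _ ≤ 2⁻¹ ^ 1 / (1 - 2⁻¹) := geom_sum_Ico_le_of_lt_one (by norm_num) (by norm_num)
    _ = 1 := by norm_num

theorem stmt_1 (c : ℕ → ℕ) (hc0 : c 0 = 0) (hc : ∀ i, 1 ≤ i → c i = 4 ^ i) :
    ∀ i k : ℕ, 1 ≤ k →
      ∑ l ∈ Finset.Icc 1 k, (2 : ℝ) ^ (c i + i + l + 2) / 2 ^ (c (i + l)) ≤ 1 := by
  intro i k _
  have hci : c i + i + 2 ≤ 2 * 4 ^ i := by
    rcases Nat.eq_zero_or_pos i with rfl | hi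
    · simp [hc0]
    · have := two_mul_add_two_le_four_pow hi
      rw [hc i hi]; omega
  refine sum_Icc_two_pow_div_two_pow_le_one k fun l hl => ?_
  have hl : 1 ≤ l := (mem_Icc.mp hl).1
  have h4l := two_mul_add_two_le_four_pow hl
  rw [hc (i + l) (by omega), pow_add]
  nlinarith [Nat.one_le_pow i 4 (by norm_num)]
end

section
/- Let m : List Bool → ℝ be nonnegative and suppose that for every finite binary string σ, ∑_{σ' a prefix of σ} m(σ') ≤ 1. Then for every n, ∑_{σ of length at most n} m(σ) / 2^(length σ) ≤ 1; consequently the (possibly infinite) sum ∑_{σ} m(σ)/2^(length σ) over all finite binary strings is at most 1. -/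
/-!
Among the strings of length `n`, exactly `2 ^ (n - j)` extend a given string of length `j`, so
`∑_{|σ| ≤ n} m σ / 2 ^ |σ|` is the average over the strings `τ` of length `n` of the chain sums
`∑_{σ ⊑ τ} m σ`, each of which is at most `1`. As there are finitely many strings of each
length, the infinite sum is the limit of these partial sums.
-/

open Finset

variable {α : Type*}

lemma List.sum_map_inits_concat {M : Type*} [AddMonoid M] (m : List α → M) (l : List α) (a : α) :
    ((l ++ [a]).inits.map m).sum = (l.inits.map m).sum + m (l ++ [a]) := by
  simp [List.inits_append]

lemma List.ofFn_snoc {n : ℕ} (s : Fin n → α) (a : α) :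
    List.ofFn (Fin.snoc s a) = List.ofFn s ++ [a] := by
  rw [List.ofFn_succ']
  simp

lemma Fintype.sum_fun_fin_succ_eq_sum_snoc {M : Type*} [AddCommMonoid M] [Fintype α] {n : ℕ}
    (f : (Fin (n + 1) → α) → M) :
    ∑ t, f t = ∑ a, ∑ s : Fin n → α, f (Fin.snoc s a) := by
  rw [← (Fin.snocEquiv fun _ => α).sum_comp f, Fintype.sum_prod_type]
  rfl

lemma sum_ofFn_div_card_pow_eq [Fintype α] [Nonempty α] (m : List α → ℝ) (n : ℕ) :
    ∑ j ∈ range (n + 1), ∑ b : Fin j → α, m (List.ofFn b) / Fintype.card α ^ j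
      = (∑ t : Fin n → α, ((List.ofFn t).inits.map m).sum) / Fintype.card α ^ n := by
  induction n with
  | zero => simp
  | succ n ih =>
    rw [sum_range_succ, ih, Fintype.sum_fun_fin_succ_eq_sum_snoc,
      Fintype.sum_fun_fin_succ_eq_sum_snoc]
    simp only [List.ofFn_snoc, List.sum_map_inits_concat, sum_add_distrib, sum_const,
      card_univ, ← sum_div]
    field_simp
    ring

lemma sum_ofFn_div_card_pow_le_one [Fintype α] [Nonempty α] (m : List α → ℝ)
    (hchain : ∀ σ : List α, (σ.inits.map m).sum ≤ 1) (n : ℕ) :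
    ∑ j ∈ range (n + 1), ∑ b : Fin j → α, m (List.ofFn b) / Fintype.card α ^ j ≤ 1 := by
  rw [sum_ofFn_div_card_pow_eq, div_le_one (by positivity)]
  calc ∑ t : Fin n → α, ((List.ofFn t).inits.map m).sum
      ≤ ∑ _t : Fin n → α, (1 : ℝ) := sum_le_sum fun t _ => hchain _
    _ = Fintype.card α ^ n := by simp

lemma summable_and_tsum_le_of_sum_ofFn_le [Fintype α] {f : List α → ℝ} {c : ℝ} (hf : 0 ≤ f)
    (h : ∀ n, ∑ j ∈ range n, ∑ b : Fin j → α, f (List.ofFn b) ≤ c) :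
    Summable f ∧ ∑' σ, f σ ≤ c := by
  have hpos : ∀ n, 0 ≤ ∑' b : Fin n → α, f (List.ofFn b) := fun n => tsum_nonneg fun _ => hf _
  have hrange : ∀ n, ∑ j ∈ range n, ∑' b : Fin j → α, f (List.ofFn b) ≤ c := by
    simpa only [tsum_fintype] using h
  have hg : Summable (f ∘ List.equivSigmaTuple.symm) :=
    (summable_sigma_of_nonneg fun _ => hf _).mpr
      ⟨fun _ => .of_finite, summable_of_sum_range_le hpos hrange⟩
  refine ⟨List.equivSigmaTuple.symm.summable_iff.mp hg, ?_⟩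
  calc ∑' σ, f σ = ∑' x : Σ n, Fin n → α, f (List.ofFn x.2) :=
        (List.equivSigmaTuple.symm.tsum_eq f).symm
    _ = ∑' n, ∑' b : Fin n → α, f (List.ofFn b) := hg.tsum_sigma' fun _ => .of_finite
    _ ≤ c := Real.tsum_le_of_sum_range_le hpos hrange

theorem stmt_6 (m : List Bool → ℝ) (hm : ∀ σ, 0 ≤ m σ)
    (hchain : ∀ σ : List Bool, (σ.inits.map (fun σ' => m σ')).sum ≤ 1) :
    (∀ n : ℕ, ∑ j ∈ Finset.range (n + 1), ∑ b : Fin j → Bool,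
        m (List.ofFn b) / 2 ^ (List.ofFn b).length ≤ 1) ∧
    Summable (fun σ : List Bool => m σ / 2 ^ σ.length) ∧
    ∑' σ : List Bool, m σ / 2 ^ σ.length ≤ 1 := by
  have hterm : ∀ σ : List Bool, 0 ≤ m σ / 2 ^ σ.length := fun σ =>
    div_nonneg (hm σ) (by positivity)
  have hpartial : ∀ n : ℕ, ∑ j ∈ range (n + 1), ∑ b : Fin j → Bool,
      m (List.ofFn b) / 2 ^ (List.ofFn b).length ≤ 1 := fun n => by
    simpa using sum_ofFn_div_card_pow_le_one m hchain n
  refine ⟨hpartial, summable_and_tsum_le_of_sum_ofFn_le hterm fun n => ?_⟩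
  exact (sum_mono_set_of_nonneg (fun _ => sum_nonneg fun _ _ => hterm _)
    (range_mono n.le_succ)).trans (hpartial n)
end

section
/- Let f : List Bool → ℕ → ℕ (an approximation, f σ s = f_s(σ)) satisfy: for every i, the set {σ | ∃ s, f σ s ≤ i} is finite. Let c 0 = 0 and c j = 4^j for j ≥ 1, and define f̂ : List Bool → ℕ → ℕ by f̂ σ s = c i for the least i such that there exists t ≤ s with f σ t < c (i+1). Then: (1) f̂ σ s ≤ f σ s for all σ, s; (2) f̂ σ is monotone non-increasing in s; (3) for every i the set {σ | ∃ s, f̂ σ s ≤ i} is finite. -/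
theorem stmt_12 (c : ℕ → ℕ) (hc0 : c 0 = 0) (hc : ∀ i, 1 ≤ i → c i = 4 ^ i)
    (f : List Bool → ℕ → ℕ)
    (hf : ∀ i, {σ : List Bool | ∃ s, f σ s ≤ i}.Finite)
    (fhat : List Bool → ℕ → ℕ)
    (hfhat : ∀ σ s, ∃ i, fhat σ s = c i ∧ (∃ t ≤ s, f σ t < c (i + 1)) ∧
        ∀ j < i, ¬ ∃ t ≤ s, f σ t < c (j + 1)) :
    (∀ σ s, fhat σ s ≤ f σ s) ∧
    (∀ σ, Antitone (fhat σ)) ∧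
    (∀ i, {σ : List Bool | ∃ s, fhat σ s ≤ i}.Finite) := by
  have cmono : ∀ j k : ℕ, j ≤ k → c j ≤ c k := by
    intro j k hjk
    rcases Nat.eq_zero_or_pos j with rfl | hj
    · rw [hc0]; exact Nat.zero_le _
    · have hk : 1 ≤ k := le_trans hj hjk
      rw [hc j hj, hc k hk]
      exact Nat.pow_le_pow_right (by norm_num) hjk
  refine ⟨?_, ?_, ?_⟩
  · intro σ s
    obtain ⟨i, he, -, hmin⟩ := hfhat σ s
    rcases Nat.eq_zero_or_pos i with rfl | hi
    · rw [he, hc0]; exact Nat.zero_le _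
    · have h := hmin (i - 1) (Nat.sub_lt hi one_pos)
      have hi1 : i - 1 + 1 = i := by omega
      rw [hi1] at h
      push_neg at h
      have := h s le_rfl
      rw [he]; exact this
  · intro σ s s' hss'
    obtain ⟨i, he, hw, hmin⟩ := hfhat σ s
    obtain ⟨i', he', hw', hmin'⟩ := hfhat σ s'
    rw [he, he']
    apply cmono
    by_contra h
    push_neg at h
    obtain ⟨t, ht, hft⟩ := hw
    exact hmin' i h ⟨t, le_trans ht hss', hft⟩
  · intro i
    apply (hf (4 ^ (i + 1) - 1)).subset
    intro σ ⟨s, hs⟩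
    obtain ⟨k, he, ⟨t, ht, hft⟩, -⟩ := hfhat σ s
    rw [he] at hs
    have hki : k ≤ i := by
      rcases Nat.eq_zero_or_pos k with rfl | hk
      · exact Nat.zero_le _
      · rw [hc k hk] at hs
        exact le_trans (le_of_lt (Nat.lt_pow_self (n := k) (by norm_num : 1 < 4))) hs
    have : f σ t < 4 ^ (i + 1) := by
      calc f σ t < c (k + 1) := hft
        _ ≤ c (i + 1) := cmono _ _ (by omega)
        _ = 4 ^ (i + 1) := hc _ (by omega)
    exact ⟨t, by omega⟩
end

section
/- Let c : ℕ → ℕ with c 0 = 0 and c i = 4^i for i ≥ 1, let i, k ∈ ℕ with k ≥ 1, and let m ≥ 0 be real. Then ∑_{l=1}^{k} (m * 2^(i+l) / 2^(c (i+l))) * 2 ≤ m / 2^(c i + 1). -/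
/-!
Since `c (i + l) = 4 ^ (i + l)` grows much faster than the exponent `c i + 2 l + i + 2`, the `l`-th
summand is at most `m / 2 ^ (c i + 1) * 2⁻¹ ^ l`, and the geometric series `∑_{l ≥ 1} 2⁻¹ ^ l` is
at most `1`.
-/

open Finset

lemma three_mul_add_one_le_four_pow (n : ℕ) : 3 * n + 1 ≤ 4 ^ n := by
  have h := one_add_mul_le_pow (a := (3 : ℤ)) (by norm_num) n
  norm_num at h
  exact_mod_cast (by linarith : (3 * n + 1 : ℤ) ≤ 4 ^ n)

lemma add_le_four_pow_add {i l a : ℕ} (hl : 1 ≤ l) (ha : a ≤ 4 ^ i + i) :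
    i + l + 1 + (a + l) ≤ 4 ^ (i + l) := by
  have hi := three_mul_add_one_le_four_pow i
  have hl' := three_mul_add_one_le_four_pow l
  rw [pow_add]
  nlinarith

lemma sum_Icc_inv_two_pow_le_one (k : ℕ) : ∑ l ∈ Icc 1 k, (2⁻¹ : ℝ) ^ l ≤ 1 := by
  rw [← Ico_add_one_right_eq_Icc, geom_sum_Ico (by norm_num) (by omega)]
  have : (0 : ℝ) ≤ 2⁻¹ ^ (k + 1) := by positivity
  norm_num
  linarith

lemma two_pow_div_two_pow_le_inv_two_pow {e f n : ℕ} (h : e + f ≤ n) :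
    (2 : ℝ) ^ e / 2 ^ n ≤ 2⁻¹ ^ f := by
  rw [div_le_iff₀ (by positivity), inv_pow, ← div_eq_inv_mul, le_div_iff₀ (by positivity),
    ← pow_add]
  exact pow_le_pow_right₀ (by norm_num) h

theorem stmt_14_general (c : ℕ → ℕ) (hc0 : c 0 = 0) (hc : ∀ i, 1 ≤ i → c i = 4 ^ i)
    (i k : ℕ) (m : ℝ) (hm : 0 ≤ m) :
    ∑ l ∈ Finset.Icc 1 k, (m * 2 ^ (i + l) / 2 ^ (c (i + l))) * 2
      ≤ m / 2 ^ (c i + 1) := by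
  have hci : c i + 1 ≤ 4 ^ i + i := by
    rcases Nat.eq_zero_or_pos i with rfl | hi
    · simp [hc0]
    · rw [hc i hi]; omega
  have hterm : ∀ l ∈ Icc 1 k,
      m * 2 ^ (i + l) / 2 ^ c (i + l) * 2 ≤ m / 2 ^ (c i + 1) * 2⁻¹ ^ l := by
    intro l hl
    have hl1 := (mem_Icc.mp hl).1
    have key := two_pow_div_two_pow_le_inv_two_pow (add_le_four_pow_add hl1 hci)
    rw [← hc (i + l) (by omega)] at key
    calc m * 2 ^ (i + l) / 2 ^ c (i + l) * 2 = m * (2 ^ (i + l + 1) / 2 ^ c (i + l)) := by ring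
      _ ≤ m * (2⁻¹ ^ (c i + 1) * 2⁻¹ ^ l) := by rw [← pow_add]; gcongr
      _ = m / 2 ^ (c i + 1) * 2⁻¹ ^ l := by rw [inv_pow]; ring
  calc ∑ l ∈ Icc 1 k, m * 2 ^ (i + l) / 2 ^ c (i + l) * 2
      ≤ ∑ l ∈ Icc 1 k, m / 2 ^ (c i + 1) * 2⁻¹ ^ l := sum_le_sum hterm
    _ = m / 2 ^ (c i + 1) * ∑ l ∈ Icc 1 k, (2⁻¹ : ℝ) ^ l := by rw [mul_sum]
    _ ≤ m / 2 ^ (c i + 1) := by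
        exact mul_le_of_le_one_right (by positivity) (sum_Icc_inv_two_pow_le_one k)

theorem stmt_14 (c : ℕ → ℕ) (hc0 : c 0 = 0) (hc : ∀ i, 1 ≤ i → c i = 4 ^ i)
    (i k : ℕ) (hk : 1 ≤ k) (m : ℝ) (hm : 0 ≤ m) :
    ∑ l ∈ Finset.Icc 1 k, (m * 2 ^ (i + l) / 2 ^ (c (i + l))) * 2
      ≤ m / 2 ^ (c i + 1) :=
  stmt_14_general c hc0 hc i k m hm
end
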